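/- arXiv:1406.5611 — 3 statements merged into one kernel-verified Lean document; each statement's English description precedes it below -/
import Mathlib

section
/- Let p ≥ 5 be a prime, let r be a nonzero integer relatively prime to p, let r̄ be a multiplicative inverse of r modulo p, and let s be an integer with 0 ≤ s ≤ p−1. If −24(1+s)·r̄ + 1 is congruent to 0 modulo p or is a quadratic nonresidue modulo p, then p−1 ∉ S*(p,r,s); equivalently, p−1 ∈ T*(p,r,s). -/
/-!
If `p - 1 ∈ S*(p,r,s)` is witnessed by `n`, then `r·n(3n-1) ≡ -2(1+s)`, and completing the
square (multiply by `12 r̄`) gives `(6n-1)² ≡ -24(1+s)r̄ + 1 (mod p)`. The right-hand side is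
thus a square, and it is nonzero mod `p` because multiplying it by `r` gives `r - 24(1+s)`,
which the second condition in `S*` keeps away from `0`. Hence its Legendre symbol is `1`.
-/

/-- The set `S*(p,r,s)`: residues `j`, `0 ≤ j ≤ p-1`, such that
`(1/2)·r·n(3n-1) ≡ j - s (mod p)` for some integer `n` (stated as
`r·n·(3n-1) ≡ 2(j-s) (mod p)`, which is equivalent since `p` is odd) and
`24(j-s) ≢ -r (mod p)`. -/
def Sstar (p : ℕ) (r s : ℤ) : Set ℤ :=
  {j | 0 ≤ j ∧ j ≤ (p : ℤ) - 1 ∧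
    (∃ n : ℤ, r * n * (3 * n - 1) ≡ 2 * (j - s) [ZMOD (p : ℤ)]) ∧
    ¬(24 * (j - s) ≡ -r [ZMOD (p : ℤ)])}

/-- The set `T*(p,r,s)`: residues `k`, `0 ≤ k ≤ p-1`, larger than every element of
`S*(p,r,s)`. -/
def Tstar (p : ℕ) (r s : ℤ) : Set ℤ :=
  {k | 0 ≤ k ∧ k ≤ (p : ℤ) - 1 ∧ ∀ j ∈ Sstar p r s, j < k}

theorem sq_six_mul_sub_one_eq {R : Type*} [CommRing R] {r rbar n c : R} (hrbar : r * rbar = 1)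
    (hn : r * n * (3 * n - 1) = 2 * c) : (6 * n - 1) ^ 2 = 24 * c * rbar + 1 := by
  linear_combination (12 * rbar) * hn - (12 * n * (3 * n - 1)) * hrbar

theorem legendreSym_eq_one_of_sub_one_mem_Sstar {p : ℕ} [Fact p.Prime] {r rbar s : ℤ}
    (hrbar : r * rbar ≡ 1 [ZMOD p]) (hmem : (p : ℤ) - 1 ∈ Sstar p r s) :
    legendreSym p (-24 * (1 + s) * rbar + 1) = 1 := by
  obtain ⟨-, -, ⟨n, hn⟩, hne⟩ := hmem
  have hrbar' : (r : ZMod p) * rbar = 1 := by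
    exact_mod_cast (ZMod.intCast_eq_intCast_iff _ _ p).2 hrbar
  have hn' : (r : ZMod p) * n * (3 * n - 1) = 2 * (-1 - s) := by
    simpa using (ZMod.intCast_eq_intCast_iff _ _ p).2 hn
  have hne' : 24 * (-1 - (s : ZMod p)) ≠ -r := fun h =>
    hne ((ZMod.intCast_eq_intCast_iff _ _ p).1 (by push_cast; simpa using h))
  have hsq : ((6 * n - 1 : ℤ) : ZMod p) ^ 2 = ((-24 * (1 + s) * rbar + 1 : ℤ) : ZMod p) := by
    push_cast
    linear_combination sq_six_mul_sub_one_eq hrbar' hn'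
  have hne0 : ((-24 * (1 + s) * rbar + 1 : ℤ) : ZMod p) ≠ 0 := fun h0 => by
    push_cast at h0
    exact hne' (by linear_combination r * h0 + 24 * (1 + (s : ZMod p)) * hrbar')
  exact (legendreSym.eq_one_iff p hne0).2 ⟨_, by rw [← hsq, sq]⟩

theorem sub_one_mem_Tstar_iff {p : ℕ} (hp : 0 < p) (r s : ℤ) :
    (p : ℤ) - 1 ∈ Tstar p r s ↔ (p : ℤ) - 1 ∉ Sstar p r s := by
  constructor
  · exact fun ⟨_, _, hlt⟩ hmem => lt_irrefl _ (hlt _ hmem)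
  · exact fun hnot => ⟨by omega, le_rfl, fun j hj =>
      lt_of_le_of_ne hj.2.1 fun h => hnot (h ▸ hj)⟩

theorem pm1_mem_Tstar_general (p : ℕ) [Fact p.Prime] (r : ℤ)
    (rbar : ℤ) (hrbar : r * rbar ≡ 1 [ZMOD (p : ℤ)])
    (s : ℕ)
    (hleg : legendreSym p (-24 * (1 + (s : ℤ)) * rbar + 1) = 0 ∨
            legendreSym p (-24 * (1 + (s : ℤ)) * rbar + 1) = -1) :
    (p : ℤ) - 1 ∉ Sstar p r (s : ℤ) ∧ (p : ℤ) - 1 ∈ Tstar p r (s : ℤ) := by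
  have hnot : (p : ℤ) - 1 ∉ Sstar p r s := fun hmem => by
    have hone := legendreSym_eq_one_of_sub_one_mem_Sstar hrbar hmem
    rcases hleg with h | h <;> rw [h] at hone <;> norm_num at hone
  exact ⟨hnot, (sub_one_mem_Tstar_iff (Fact.out : p.Prime).pos r s).2 hnot⟩

/-- Let `p ≥ 5` be prime, `r` a nonzero integer coprime to `p` with inverse `r̄` mod `p`,
and `0 ≤ s ≤ p-1`.  If the Legendre symbol `(-24(1+s)r̄+1 / p)` is `0` or `-1`, then
`p-1 ∉ S*(p,r,s)`; equivalently, `p-1 ∈ T*(p,r,s)`. -/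
theorem pm1_mem_Tstar (p : ℕ) [Fact p.Prime] (hp5 : 5 ≤ p) (r : ℤ) (hr : r ≠ 0)
    (hrp : IsCoprime r (p : ℤ)) (rbar : ℤ) (hrbar : r * rbar ≡ 1 [ZMOD (p : ℤ)])
    (s : ℕ) (hs : (s : ℤ) ≤ (p : ℤ) - 1)
    (hleg : legendreSym p (-24 * (1 + (s : ℤ)) * rbar + 1) = 0 ∨
            legendreSym p (-24 * (1 + (s : ℤ)) * rbar + 1) = -1) :
    (p : ℤ) - 1 ∉ Sstar p r (s : ℤ) ∧ (p : ℤ) - 1 ∈ Tstar p r (s : ℤ) :=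
  pm1_mem_Tstar_general p r rbar hrbar s hleg
end

section
/- Let p be a prime, let j be an integer with 0 ≤ j ≤ p−1, and let k, M, N be integers with 0 ≤ k ≤ M−1 ≤ N−1. Then α(p,N,j,k) = α(p,M,j,k). -/
/-- The polynomial `F(q,N) = ∑_{n=0}^N (q;q)_n`. -/
noncomputable def Fpoly (N : ℕ) : Polynomial ℤ :=
  ∑ n ∈ Finset.range (N + 1), ∏ j ∈ Finset.Icc 1 n, (1 - Polynomial.X ^ j)

/-- The polynomial `A_p(N,i,q)` of the `p`-dissection
`F(q,N) = ∑_{i=0}^{p-1} q^i A_p(N,i,q^p)`; its `k`-th coefficient is the coefficient of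
`q^{pk+i}` in `F(q,N)` (which vanishes for `k > N(N+1)/2` since `deg F(q,N) ≤ N(N+1)/2`). -/
noncomputable def Apoly (p N i : ℕ) : Polynomial ℤ :=
  ∑ k ∈ Finset.range (N * (N + 1) / 2 + 1),
    Polynomial.C ((Fpoly N).coeff (p * k + i)) * Polynomial.X ^ k

/-- `α(p,n,i,k)`: the coefficient of `q^k` in the polynomial `A_p(pn-1, i, 1-q)`. -/
noncomputable def alphaCoeff (p n i k : ℕ) : ℤ :=
  ((Apoly p (p * n - 1) i).comp (1 - Polynomial.X)).coeff k

/-!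
For `n ≥ pM` the product `(q;q)_n` is divisible by `(q^p;q^p)_M`, hence so is
`F(q,pN-1) - F(q,pM-1) = ∑_{pM ≤ n < pN} (q;q)_n`. Since `(q^p;q^p)_M` is a polynomial in `q^p`,
taking `j`-th components of the `p`-dissection (`j < p`) gives
`A_p(pN-1,j,q) - A_p(pM-1,j,q) = (q;q)_M · T_j(q)`. After `q ↦ 1 - q` every factor `1 - (1-q)^s`
of `(q;q)_M` is divisible by `q`, so the difference is divisible by `q^M` and its coefficients of
`q^k`, `k < M`, vanish.
-/

open Polynomial Finset

namespace Polynomial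

section Dissection

variable {R : Type*} {p j : ℕ}

theorem coeff_sum_range_C_mul_X_pow [Semiring R] {f : ℕ → R} {D : ℕ}
    (hf : ∀ m, D < m → f m = 0) (k : ℕ) :
    (∑ l ∈ range (D + 1), C (f l) * X ^ l).coeff k = f k := by
  simp only [finsetSum_coeff, coeff_C_mul_X_pow]
  rw [sum_ite_eq, ite_eq_left_iff, mem_range, not_lt, Nat.succ_le_iff]
  exact fun hk => (hf k hk).symm

/-- For `0 < p` and `j < p`, the component `P_j` of the `p`-dissection
`P(q) = ∑_{j<p} q^j P_j(q^p)`. -/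
noncomputable def dissect [Semiring R] (p j : ℕ) (P : R[X]) : R[X] :=
  ∑ l ∈ range (P.natDegree + 1), C (P.coeff (p * l + j)) * X ^ l

theorem coeff_dissect [Semiring R] (hp : 0 < p) (P : R[X]) (k : ℕ) :
    (dissect p j P).coeff k = P.coeff (p * k + j) :=
  coeff_sum_range_C_mul_X_pow (fun m hm => coeff_eq_zero_of_natDegree_lt (by nlinarith)) k

theorem dissect_add [Semiring R] (hp : 0 < p) (P Q : R[X]) :
    dissect p j (P + Q) = dissect p j P + dissect p j Q := by
  ext k
  simp only [coeff_add, coeff_dissect hp]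

theorem dissect_sub [Ring R] (hp : 0 < p) (P Q : R[X]) :
    dissect p j (P - Q) = dissect p j P - dissect p j Q := by
  ext k
  simp only [coeff_sub, coeff_dissect hp]

theorem dissect_monomial_mul [Semiring R] (hp : 0 < p) (hj : j < p) (i : ℕ) (a : R) (T : R[X]) :
    dissect p j (monomial (p * i) a * T) = monomial i a * dissect p j T := by
  ext k
  simp only [← C_mul_X_pow_eq_monomial, mul_assoc, coeff_C_mul, coeff_X_pow_mul',
    coeff_dissect hp]
  congr 1
  obtain hik | hki := le_or_gt i k
  · obtain ⟨d, rfl⟩ := Nat.exists_eq_add_of_le hik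
    rw [if_pos hik, if_pos (by nlinarith), Nat.add_sub_cancel_left]
    congr 1
    rw [mul_add, add_assoc, Nat.add_sub_cancel_left]
  · have := Nat.mul_le_mul_left p (Nat.succ_le_of_lt hki)
    rw [if_neg (by rw [Nat.mul_succ] at this; omega), if_neg (by omega)]

theorem dissect_expand_mul [CommSemiring R] (hp : 0 < p) (hj : j < p) (H T : R[X]) :
    dissect p j (expand R p H * T) = H * dissect p j T := by
  induction H using Polynomial.induction_on' with
  | add P Q hP hQ => rw [map_add, add_mul, dissect_add hp, hP, hQ, add_mul]
  | monomial i a => rw [expand_monomial, mul_comm i p, dissect_monomial_mul hp hj]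

end Dissection

end Polynomial

noncomputable def qPochhammer (R : Type*) [CommRing R] (n : ℕ) : R[X] :=
  ∏ j ∈ Icc 1 n, (1 - X ^ j)

section qPochhammer

variable {R : Type*} [CommRing R]

theorem natDegree_qPochhammer_le (n : ℕ) : (qPochhammer R n).natDegree ≤ n * (n + 1) / 2 := by
  have hgauss := sum_range_id_mul_two (n + 1)
  calc (qPochhammer R n).natDegree
      ≤ ∑ j ∈ Icc 1 n, (1 - X ^ j : R[X]).natDegree := natDegree_prod_le _ _
    _ ≤ ∑ j ∈ range (n + 1), j := by
        refine (sum_le_sum fun j _ => ?_).trans (sum_le_sum_of_subset fun j hj => ?_)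
        · exact (natDegree_sub_le _ _).trans (by simpa using natDegree_X_pow_le j)
        · simp only [mem_Icc, mem_range] at hj ⊢; omega
    _ = n * (n + 1) / 2 :=
        (Nat.div_eq_of_eq_mul_left two_pos (by rw [hgauss, Nat.add_sub_cancel, mul_comm])).symm

theorem expand_qPochhammer_dvd {p M n : ℕ} (hp : 0 < p) (h : p * M ≤ n) :
    expand R p (qPochhammer R M) ∣ qPochhammer R n := by
  have hexpand :
      expand R p (qPochhammer R M) = ∏ t ∈ (Icc 1 M).image (· * p), (1 - X ^ t) := by
    rw [qPochhammer, map_prod, prod_image fun a _ b _ hab => Nat.eq_of_mul_eq_mul_right hp hab]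
    simp [← pow_mul, mul_comm]
  rw [hexpand, qPochhammer]
  refine prod_dvd_prod_of_subset _ _ _ fun t ht => ?_
  simp only [mem_image, mem_Icc] at ht ⊢
  obtain ⟨s, ⟨hs1, hsM⟩, rfl⟩ := ht
  exact ⟨by nlinarith, by nlinarith⟩

theorem X_pow_dvd_qPochhammer_comp (n : ℕ) : X ^ n ∣ (qPochhammer R n).comp (1 - X) := by
  rw [qPochhammer, Polynomial.prod_comp, show (X : R[X]) ^ n = ∏ _j ∈ Icc 1 n, X by simp]
  refine prod_dvd_prod_of_dvd _ _ fun j _ => ?_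
  rw [sub_comp, one_comp, X_pow_comp]
  have h := sub_dvd_pow_sub_pow (1 : R[X]) (1 - X) j
  rwa [one_pow, sub_sub_cancel] at h

end qPochhammer

theorem Fpoly_eq_sum_qPochhammer (N : ℕ) :
    Fpoly N = ∑ n ∈ range (N + 1), qPochhammer ℤ n :=
  rfl

theorem natDegree_Fpoly_le (N : ℕ) : (Fpoly N).natDegree ≤ N * (N + 1) / 2 :=
  Fpoly_eq_sum_qPochhammer N ▸ natDegree_sum_le_of_forall_le _ _ fun n hn =>
    (natDegree_qPochhammer_le n).trans
      (Nat.div_le_div_right (Nat.mul_le_mul (by simpa [Nat.lt_succ_iff] using hn)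
        (by simpa using hn)))

theorem Apoly_eq_dissect {p : ℕ} (hp : 0 < p) (N i : ℕ) :
    Apoly p N i = dissect p i (Fpoly N) := by
  ext k
  rw [coeff_dissect hp, Apoly, coeff_sum_range_C_mul_X_pow]
  intro m hm
  exact coeff_eq_zero_of_natDegree_lt (by nlinarith [natDegree_Fpoly_le N])

theorem expand_qPochhammer_dvd_Fpoly_sub {p M a b : ℕ} (hp : 0 < p) (hpM : p * M ≤ a + 1)
    (hab : a ≤ b) : expand ℤ p (qPochhammer ℤ M) ∣ Fpoly b - Fpoly a := by
  rw [Fpoly_eq_sum_qPochhammer, Fpoly_eq_sum_qPochhammer, ← sum_Ico_eq_sub _ (by omega)]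
  exact dvd_sum fun n hn => expand_qPochhammer_dvd hp (by simp only [mem_Ico] at hn; omega)

theorem alphaCoeff_stable_general (p : ℕ) (j : ℕ) (hj : j ≤ p - 1)
    (k M N : ℕ) (hM : 1 ≤ M) (hk : k ≤ M - 1) (hMN : M ≤ N) :
    alphaCoeff p N j k = alphaCoeff p M j k := by
  rcases Nat.eq_zero_or_pos p with rfl | hp
  · -- `0 * n - 1 = 0`, so both sides are the same coefficient
    simp [alphaCoeff]
  have hpM : 1 ≤ p * M := Nat.mul_pos hp hM
  obtain ⟨T, hT⟩ := expand_qPochhammer_dvd_Fpoly_sub hp (by omega : p * M ≤ p * M - 1 + 1)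
    (Nat.sub_le_sub_right (Nat.mul_le_mul_left p hMN) 1)
  have hdiff :
      Apoly p (p * N - 1) j - Apoly p (p * M - 1) j = qPochhammer ℤ M * dissect p j T := by
    rw [Apoly_eq_dissect hp, Apoly_eq_dissect hp, ← dissect_sub hp, hT,
      dissect_expand_mul hp (by omega)]
  have hvanish : X ^ M ∣ (Apoly p (p * N - 1) j - Apoly p (p * M - 1) j).comp (1 - X) := by
    rw [hdiff, mul_comp]
    exact dvd_mul_of_dvd_left (X_pow_dvd_qPochhammer_comp M) _
  have hcoeff := X_pow_dvd_iff.mp hvanish k (by omega)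
  rwa [sub_comp, coeff_sub, sub_eq_zero] at hcoeff

/-- If `p` is prime, `0 ≤ j ≤ p-1` and `0 ≤ k ≤ M-1 ≤ N-1`, then
`α(p,N,j,k) = α(p,M,j,k)`. -/
theorem alphaCoeff_stable (p : ℕ) (hp : Nat.Prime p) (j : ℕ) (hj : j ≤ p - 1)
    (k M N : ℕ) (hM : 1 ≤ M) (hk : k ≤ M - 1) (hMN : M ≤ N) :
    alphaCoeff p N j k = alphaCoeff p M j k :=
  alphaCoeff_stable_general p j hj k M N hM hk hMN
end

section
/- Let m be a nonnegative integer. For integers n ≥ 0 and k with 0 ≤ k ≤ n+1, the polynomials f(x,n,k,m) satisfy the recursion f(x,n+1,k,m) = −( (x + n − m) · f(x,n,k,m) + x · f(x,n,k−1,m) ), as an identity of polynomials in x. -/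
/-- The generalized signless Stirling numbers of the first kind `s₁(n,j,m)`, defined by
`∑_{j=0}^n s₁(n,j,m) x^j = (x-m)(x-m+1)⋯(x-m+n-1)`. -/
noncomputable def s1gen (n j : ℕ) (m : ℕ) : ℤ :=
  (∏ i ∈ Finset.range n,
    (Polynomial.X - Polynomial.C (m : ℤ) + Polynomial.C (i : ℤ))).coeff j

/-- The polynomial `f(x,n,k,m) = (-1)^n ∑_{j=k}^n C(j,k) s₁(n,j,m) x^j` for `0 ≤ k ≤ n`,
and `0` otherwise. -/
noncomputable def fpoly (n : ℕ) (k : ℤ) (m : ℕ) : Polynomial ℤ :=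
  if 0 ≤ k ∧ k ≤ (n : ℤ) then
    Polynomial.C ((-1 : ℤ) ^ n) *
      ∑ j ∈ Finset.Icc k.toNat n,
        Polynomial.C ((j.choose k.toNat : ℤ) * s1gen n j m) * Polynomial.X ^ j
  else 0

/-! With `P n = (x - m)(x - m + 1)⋯(x - m + n - 1)`, the polynomial `f(x,n,k,m)` is
`(-1)^n x^k D⁽ᵏ⁾ P n`, where `D⁽ᵏ⁾` is the `k`-th Hasse derivative `x^j ↦ C(j,k) x^(j-k)`; for
`k > n` both sides vanish because `deg P n = n`. Since `P (n+1) = P n · (x + n - m)` has a linear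
second factor, Leibniz's rule for Hasse derivatives collapses to
`D⁽ᵏ⁾ P (n+1) = D⁽ᵏ⁾ P n · (x + n - m) + D⁽ᵏ⁻¹⁾ P n`, which is the recursion after multiplying
by `(-1)^(n+1) x^k`. -/

open Polynomial Finset

section HasseDeriv

variable {R : Type*} [Semiring R]

theorem hasseDeriv_succ_mul_X_add_C (p : R[X]) (a : R) (k : ℕ) :
    hasseDeriv (k + 1) (p * (X + C a)) = hasseDeriv (k + 1) p * (X + C a) + hasseDeriv k p := by
  have hasseDeriv_X_add_C_of_two_le (j : ℕ) : hasseDeriv (j + 2) (X + C a) = 0 := by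
    simp [hasseDeriv_X, hasseDeriv_C]
  rw [hasseDeriv_mul, Nat.sum_antidiagonal_succ', sum_eq_single (k, 0)]
  · simp
  · rintro ⟨i, _ | j⟩ _ hne
    · simp_all
    · simp [hasseDeriv_X_add_C_of_two_le]
  · simp

theorem sum_Icc_choose_mul_coeff_mul_X_pow {p : R[X]} {n : ℕ} (hp : p.natDegree ≤ n) (k : ℕ) :
    ∑ j ∈ Icc k n, C ((j.choose k : R) * p.coeff j) * X ^ j = X ^ k * hasseDeriv k p := by
  ext j
  simp only [finsetSum_coeff, coeff_C_mul_X_pow, sum_ite_eq, mem_Icc, coeff_X_pow_mul',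
    hasseDeriv_coeff]
  by_cases hkj : k ≤ j
  · rw [Nat.sub_add_cancel hkj]
    by_cases hjn : j ≤ n
    · simp [hkj, hjn]
    · simp [hkj, hjn, coeff_eq_zero_of_natDegree_lt (hp.trans_lt (not_le.mp hjn))]
  · simp [hkj]

end HasseDeriv

noncomputable def shiftedPochhammer (n m : ℕ) : ℤ[X] :=
  ∏ i ∈ range n, (X - C (m : ℤ) + C (i : ℤ))

theorem shiftedPochhammer_succ (n m : ℕ) :
    shiftedPochhammer (n + 1) m = shiftedPochhammer n m * (X + C ((n : ℤ) - m)) := by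
  simp only [shiftedPochhammer, prod_range_succ, C_sub]
  ring

theorem natDegree_shiftedPochhammer_le (n m : ℕ) : (shiftedPochhammer n m).natDegree ≤ n := by
  refine (natDegree_prod_le _ _).trans
    ((sum_le_card_nsmul _ _ 1 fun i _ => by compute_degree).trans ?_)
  simp

theorem fpoly_natCast (n k m : ℕ) :
    fpoly n k m = C ((-1) ^ n) * (X ^ k * hasseDeriv k (shiftedPochhammer n m)) := by
  rw [← sum_Icc_choose_mul_coeff_mul_X_pow (natDegree_shiftedPochhammer_le n m), fpoly]
  split_ifs with hk
  · simp [s1gen, shiftedPochhammer]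
  · rw [Icc_eq_empty (by omega), sum_empty, mul_zero]

theorem fpoly_of_neg (n m : ℕ) {k : ℤ} (hk : k < 0) : fpoly n k m = 0 :=
  if_neg (by omega)

theorem fpoly_rec_general (m : ℕ) (n : ℕ) (k : ℤ) :
    fpoly (n + 1) k m =
      -((Polynomial.X + Polynomial.C (n : ℤ) - Polynomial.C (m : ℤ)) * fpoly n k m
        + Polynomial.X * fpoly n (k - 1) m) := by
  rcases lt_or_ge k 0 with hk | hk
  · simp [fpoly_of_neg _ _ hk, fpoly_of_neg _ _ (show k - 1 < 0 by omega)]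
  lift k to ℕ using hk
  cases k with
  | zero =>
    rw [fpoly_natCast, fpoly_natCast, fpoly_of_neg _ _ (by omega), shiftedPochhammer_succ]
    simp only [pow_zero, one_mul, hasseDeriv_zero', pow_succ, C_mul, C_sub, C_neg, C_1]
    ring
  | succ k =>
    rw [show ((k + 1 : ℕ) : ℤ) - 1 = k by omega, fpoly_natCast, fpoly_natCast, fpoly_natCast,
      shiftedPochhammer_succ, hasseDeriv_succ_mul_X_add_C]
    simp only [pow_succ, C_mul, C_sub, C_neg, C_1]
    ring

/-- For `0 ≤ k ≤ n+1`, the recursion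
`f(x,n+1,k,m) = -((x+n-m) f(x,n,k,m) + x f(x,n,k-1,m))` holds. -/
theorem fpoly_rec (m : ℕ) (n : ℕ) (k : ℤ) (hk : 0 ≤ k) (hk' : k ≤ (n : ℤ) + 1) :
    fpoly (n + 1) k m =
      -((Polynomial.X + Polynomial.C (n : ℤ) - Polynomial.C (m : ℤ)) * fpoly n k m
        + Polynomial.X * fpoly n (k - 1) m) :=
  fpoly_rec_general m n k
end
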